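/- arXiv:1912.01645 — 2 statements merged into one kernel-verified Lean document; each statement's English description precedes it below -/
import Mathlib

section
/- Fix an integer $g \geq 1$ and define $\mathcal{M}_{g,1} = \{ m + 1/s : s \in \mathbb{Z} \setminus \{0\},\ m \in \mathbb{Z} \text{ odd},\ |m| \leq 2g-1 \}$, $\mathcal{M}_{g,n} = \{ x/n : x \in \mathcal{M}_{g,1} \}$ for $n \geq 1$, and $\mathcal{M}_g = \mathbb{Z} \cup \bigcup_{n \geq 1} \mathcal{M}_{g,n}$. Then $\mathcal{M}_g$ is nowhere dense in $\mathbb{R}$. -/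
def Mg1 (g : ℤ) : Set ℝ :=
  {x : ℝ | ∃ m s : ℤ, s ≠ 0 ∧ Odd m ∧ |m| ≤ 2 * g - 1 ∧ x = (m : ℝ) + 1 / (s : ℝ)}

def Mgn (g : ℤ) (n : ℕ) : Set ℝ := {y : ℝ | ∃ x ∈ Mg1 g, y = x / (n : ℝ)}

def Mg (g : ℤ) : Set ℝ :=
  {x : ℝ | ∃ m : ℤ, x = (m : ℝ)} ∪ ⋃ n ∈ {n : ℕ | 1 ≤ n}, Mgn g n

/-- For a finite set not containing `x`, there is a uniform gap. -/
lemma finite_gap {x : ℝ} {F : Set ℝ} (hF : F.Finite) (hx : x ∉ F) :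
    ∃ ε > 0, ∀ y ∈ F, ε ≤ |y - x| := by
  obtain ⟨ε, hε, hb⟩ := Metric.isOpen_iff.mp hF.isClosed.isOpen_compl x hx
  refine ⟨ε, hε, fun y hy => ?_⟩
  by_contra h
  push_neg at h
  exact hb (by simpa [Metric.mem_ball, Real.dist_eq] using h) hy

/-- An irrational number has a uniform gap to the integers. -/
lemma int_gap {x : ℝ} (hx : Irrational x) : ∃ ε > 0, ∀ k : ℤ, ε ≤ |(k : ℝ) - x| := by
  have h1 : (⌊x⌋ : ℝ) < x := (Int.floor_le x).lt_of_ne (fun h => hx.ne_int ⌊x⌋ h.symm)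
  have h2 : x < (⌊x⌋ : ℝ) + 1 := Int.lt_floor_add_one x
  refine ⟨min (x - ⌊x⌋) ((⌊x⌋ : ℝ) + 1 - x), lt_min (by linarith) (by linarith), fun k => ?_⟩
  rcases le_or_gt k ⌊x⌋ with hk | hk
  · have hk' : (k : ℝ) ≤ (⌊x⌋ : ℝ) := by exact_mod_cast hk
    have h3 : x - (k : ℝ) ≤ |(k : ℝ) - x| := by rw [abs_sub_comm]; exact le_abs_self _
    have := min_le_left (x - (⌊x⌋ : ℝ)) ((⌊x⌋ : ℝ) + 1 - x)
    linarith
  · have hk' : (⌊x⌋ : ℝ) + 1 ≤ (k : ℝ) := by exact_mod_cast hk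
    have h3 : (k : ℝ) - x ≤ |(k : ℝ) - x| := le_abs_self _
    have := min_le_right (x - (⌊x⌋ : ℝ)) ((⌊x⌋ : ℝ) + 1 - x)
    linarith

/-- An irrational number has a uniform gap to `Mg g`. -/
lemma mg_gap (g : ℤ) (hg : 1 ≤ g) {x : ℝ} (hx : Irrational x) :
    ∃ ε > 0, ∀ y ∈ Mg g, ε ≤ |y - x| := by
  have hgR : (1 : ℝ) ≤ (g : ℝ) := by exact_mod_cast hg
  have hc : 0 < |x| := abs_pos.mpr hx.ne_zero
  set c := |x| with hcdef
  -- choose N with 2g/N < c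
  obtain ⟨N, hN⟩ := exists_nat_gt (2 * (g : ℝ) / c)
  have hN0 : 0 < (N : ℝ) := lt_trans (by positivity) hN
  have hNg : 2 * (g : ℝ) / N < c := by
    rw [div_lt_iff₀ hN0]
    have := (div_lt_iff₀ hc).mp hN
    nlinarith
  -- the finite set of candidate limit points m/n
  set F1 : Set ℝ := (fun p : ℤ × ℤ => (p.1 : ℝ) / (p.2 : ℝ)) ''
    (Set.Icc (-(2 * g - 1)) (2 * g - 1) ×ˢ Set.Icc (1 : ℤ) (N : ℤ)) with hF1def
  have hF1fin : F1.Finite :=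
    ((Set.finite_Icc _ _).prod (Set.finite_Icc _ _)).image _
  have hxF1 : x ∉ F1 := by
    rintro ⟨⟨m, n⟩, -, h⟩
    exact hx ⟨(m : ℚ) / (n : ℚ), by push_cast; exact h⟩
  obtain ⟨d, hd, hdF⟩ := finite_gap hF1fin hxF1
  -- choose S with 1/S < d/2
  obtain ⟨S, hS⟩ := exists_nat_gt (2 / d)
  have hS0 : 0 < (S : ℝ) := lt_trans (by positivity) hS
  have hSd : 1 / (S : ℝ) < d / 2 := by
    rw [div_lt_div_iff₀ hS0 (by norm_num : (0:ℝ) < 2)]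
    have := (div_lt_iff₀ hd).mp hS
    nlinarith
  -- the finite set of points (m + 1/s)/n with small parameters
  set F2 : Set ℝ := (fun p : ℤ × ℤ × ℤ => ((p.1 : ℝ) + 1 / (p.2.2 : ℝ)) / (p.2.1 : ℝ)) ''
    (Set.Icc (-(2 * g - 1)) (2 * g - 1) ×ˢ
      (Set.Icc (1 : ℤ) (N : ℤ) ×ˢ Set.Icc (-(S : ℤ)) (S : ℤ))) with hF2def
  have hF2fin : F2.Finite :=
    ((Set.finite_Icc _ _).prod ((Set.finite_Icc _ _).prod (Set.finite_Icc _ _))).image _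
  have hxF2 : x ∉ F2 := by
    rintro ⟨⟨m, n, s⟩, -, h⟩
    exact hx ⟨((m : ℚ) + 1 / (s : ℚ)) / (n : ℚ), by push_cast; exact h⟩
  obtain ⟨e2, he2, hF2⟩ := finite_gap hF2fin hxF2
  obtain ⟨e0, he0, hint⟩ := int_gap hx
  refine ⟨min (min e0 e2) (min (c - 2 * (g : ℝ) / N) (d / 2)),
    lt_min (lt_min he0 he2) (lt_min (by linarith) (by linarith)), fun y hy => ?_⟩
  have hεe0 : min (min e0 e2) (min (c - 2 * (g : ℝ) / N) (d / 2)) ≤ e0 :=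
    le_trans (min_le_left _ _) (min_le_left _ _)
  have hεe2 : min (min e0 e2) (min (c - 2 * (g : ℝ) / N) (d / 2)) ≤ e2 :=
    le_trans (min_le_left _ _) (min_le_right _ _)
  have hε1 : min (min e0 e2) (min (c - 2 * (g : ℝ) / N) (d / 2)) ≤ c - 2 * (g : ℝ) / N :=
    le_trans (min_le_right _ _) (min_le_left _ _)
  have hεd : min (min e0 e2) (min (c - 2 * (g : ℝ) / N) (d / 2)) ≤ d / 2 :=
    le_trans (min_le_right _ _) (min_le_right _ _)
  rcases hy with ⟨k, rfl⟩ | hy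
  · exact le_trans hεe0 (hint k)
  · obtain ⟨n, hn, hyn⟩ := Set.mem_iUnion₂.mp hy
    obtain ⟨z, ⟨m, s, hs, -, hmle, rfl⟩, rfl⟩ := hyn
    have hn1 : (1 : ℝ) ≤ (n : ℝ) := by exact_mod_cast hn
    have hnpos : (0 : ℝ) < (n : ℝ) := by linarith
    simp only [Set.mem_setOf_eq] at hn
    have hmR : |(m : ℝ)| ≤ 2 * (g : ℝ) - 1 := by exact_mod_cast hmle
    have hs1 : (1 : ℝ) ≤ |(s : ℝ)| := by exact_mod_cast Int.one_le_abs hs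
    have hsinv : |1 / (s : ℝ)| ≤ 1 := by
      rw [abs_div, abs_one]
      rw [div_le_one (by linarith)]
      linarith
    have hybound : |((m : ℝ) + 1 / (s : ℝ)) / (n : ℝ)| ≤ 2 * (g : ℝ) / (n : ℝ) := by
      rw [abs_div, abs_of_pos hnpos]
      gcongr
      calc |(m : ℝ) + 1 / (s : ℝ)| ≤ |(m : ℝ)| + |1 / (s : ℝ)| := abs_add_le _ _
        _ ≤ 2 * (g : ℝ) := by linarith
    by_cases hnN : (n : ℤ) ≤ (N : ℤ)
    · by_cases hsS : |s| ≤ (S : ℤ)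
      · -- small parameters: y is in the finite set F2
        have hmmem : m ∈ Set.Icc (-(2 * g - 1)) (2 * g - 1) := Set.mem_Icc.mpr (abs_le.mp hmle)
        have hnmem : (n : ℤ) ∈ Set.Icc (1 : ℤ) (N : ℤ) :=
          Set.mem_Icc.mpr ⟨by exact_mod_cast hn, hnN⟩
        have hsmem : s ∈ Set.Icc (-(S : ℤ)) (S : ℤ) := Set.mem_Icc.mpr (abs_le.mp hsS)
        refine le_trans hεe2 (hF2 _ ⟨⟨m, ((n : ℤ), s)⟩,
          Set.mk_mem_prod hmmem (Set.mk_mem_prod hnmem hsmem), by push_cast; ring⟩)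
      · -- large s: y is close to m/n which is far from x
        push_neg at hsS
        have hsR : (S : ℝ) < |(s : ℝ)| := by exact_mod_cast hsS
        have hsmall : |1 / (s : ℝ)| < d / 2 := by
          rw [abs_div, abs_one]
          calc 1 / |(s : ℝ)| < 1 / (S : ℝ) :=
                one_div_lt_one_div_of_lt hS0 hsR
            _ < d / 2 := hSd
        have hmem : (m : ℝ) / (n : ℝ) ∈ F1 := by
          refine ⟨(m, (n : ℤ)), Set.mk_mem_prod (Set.mem_Icc.mpr (abs_le.mp hmle))
            (Set.mem_Icc.mpr ⟨by exact_mod_cast hn, hnN⟩), by push_cast; ring⟩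
        have hdmn : d ≤ |(m : ℝ) / (n : ℝ) - x| := hdF _ hmem
        have hdiff : |((m : ℝ) + 1 / (s : ℝ)) / (n : ℝ) - (m : ℝ) / (n : ℝ)| < d / 2 := by
          have heq : ((m : ℝ) + 1 / (s : ℝ)) / (n : ℝ) - (m : ℝ) / (n : ℝ)
              = (1 / (s : ℝ)) / (n : ℝ) := by ring
          rw [heq, abs_div, abs_of_pos hnpos]
          calc |1 / (s : ℝ)| / (n : ℝ) ≤ |1 / (s : ℝ)| / 1 := by
                apply div_le_div_of_nonneg_left (abs_nonneg _) (by norm_num) hn1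
            _ = |1 / (s : ℝ)| := by rw [div_one]
            _ < d / 2 := hsmall
        have htri : |(m : ℝ) / (n : ℝ) - x| ≤
            |(m : ℝ) / (n : ℝ) - ((m : ℝ) + 1 / (s : ℝ)) / (n : ℝ)|
            + |((m : ℝ) + 1 / (s : ℝ)) / (n : ℝ) - x| := abs_sub_le _ _ _
        rw [abs_sub_comm] at hdiff
        linarith
    · -- large n: y is close to 0, far from x
      push_neg at hnN
      have hnNR : (N : ℝ) ≤ (n : ℝ) := by
        have : (N : ℤ) ≤ (n : ℤ) := le_of_lt hnN
        exact_mod_cast this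
      have h2gn : 2 * (g : ℝ) / (n : ℝ) ≤ 2 * (g : ℝ) / (N : ℝ) := by
        apply div_le_div_of_nonneg_left (by linarith) hN0 hnNR
      have habs : c - |((m : ℝ) + 1 / (s : ℝ)) / (n : ℝ)| ≤
          |((m : ℝ) + 1 / (s : ℝ)) / (n : ℝ) - x| := by
        rw [abs_sub_comm]
        exact le_trans (sub_le_sub_left (le_refl _) _) (abs_sub_abs_le_abs_sub x _)
      linarith

theorem stmt7 (g : ℤ) (hg : 1 ≤ g) : IsNowhereDense (Mg g) := by
  have hsub : ∀ x : ℝ, Irrational x → x ∉ closure (Mg g) := by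
    intro x hx hxc
    obtain ⟨ε, hε, hgap⟩ := mg_gap g hg hx
    obtain ⟨y, hy, hdist⟩ := Metric.mem_closure_iff.mp hxc ε hε
    rw [Real.dist_eq, abs_sub_comm] at hdist
    exact absurd hdist (not_lt.mpr (hgap y hy))
  have hdense : Dense (closure (Mg g))ᶜ :=
    Dense.mono (fun x hx => hsub x hx) dense_irrational
  exact interior_eq_empty_iff_dense_compl.mpr hdense
end

section
/- Let $A \geq 1$ be an integer and define $S = \{ p/q \in \mathbb{Q} : p \geq 1,\ q \neq 0,\ \exists a \in \mathbb{Z},\ |a| \leq A,\ \exists b \in \{1,-1\},\ p \mid (aq - b) \} \subset \mathbb{R}$. Then $S$ is nowhere dense in $\mathbb{R}$. -/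
/-!
Let `y = p / q` lie in the set, with `a * q - b = p * k`. Dividing by `q` gives `k * y = a - b / q`.
If `k = 0` then `q = ±1` and `y` is an integer. Otherwise `|k| * |y| ≤ A + 1`, so on the region
`|y| > (A + 1) / K` only the finitely many triples `(a, k, b)` with `|k| < K` occur, and for each of
them the points `(a - b / q) / k` accumulate only at `a / k`. Hence away from `0` the set lies locally
in a closed countable set, its closure is countable, and a countable subset of `ℝ` has empty interior.
-/

open Filter Topology Set

def slopeSet (A : ℤ) : Set ℝ :=
  {x : ℝ | ∃ p q : ℤ, 1 ≤ p ∧ q ≠ 0 ∧ x = (p : ℝ) / (q : ℝ) ∧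
    ∃ a : ℤ, |a| ≤ A ∧ ∃ b : ℤ, (b = 1 ∨ b = -1) ∧ p ∣ (a * q - b)}

def slopeCover (A : ℤ) (K : ℕ) : Set ℝ :=
  range ((↑) : ℤ → ℝ) ∪ ⋃ a ∈ Icc (-A) A, ⋃ k ∈ Icc (-(K : ℤ)) K, ⋃ b ∈ ({1, -1} : Set ℤ),
    insert ((a : ℝ) / k) (range fun q : ℤ => ((a : ℝ) - b / q) / k)

theorem tendsto_inv_intCast_cofinite : Tendsto (fun q : ℤ => (q : ℝ)⁻¹) cofinite (𝓝 0) :=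
  tendsto_inv₀_cobounded.comp <| Metric.cobounded_eq_cocompact (α := ℝ) ▸ Int.tendsto_coe_cofinite

theorem isClosed_insert_range_sub_div_intCast (a b k : ℝ) :
    IsClosed (insert (a / k) (range fun q : ℤ => (a - b / q) / k)) := by
  have h : Tendsto (fun q : ℤ => (a - b / q) / k) cofinite (𝓝 ((a - b * 0) / k)) :=
    (tendsto_const_nhds.sub (tendsto_inv_intCast_cofinite.const_mul b)).div_const k
  rw [mul_zero, sub_zero] at h
  exact h.isCompact_insert_range_of_cofinite.isClosed

theorem isClosed_slopeCover (A : ℤ) (K : ℕ) : IsClosed (slopeCover A K) :=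
  Real.isClosed_range_intCast.union <| (finite_Icc _ _).isClosed_biUnion fun _ _ ↦
    (finite_Icc _ _).isClosed_biUnion fun _ _ ↦ (toFinite _).isClosed_biUnion fun _ _ ↦
      isClosed_insert_range_sub_div_intCast _ _ _

theorem countable_slopeCover (A : ℤ) (K : ℕ) : (slopeCover A K).Countable :=
  (countable_range _).union <| (to_countable _).biUnion fun _ _ ↦ (to_countable _).biUnion
    fun _ _ ↦ (to_countable _).biUnion fun _ _ ↦ (countable_range _).insert _

theorem mem_slopeCover {A : ℤ} {K : ℕ} {y : ℝ} (hy : y ∈ slopeSet A)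
    (hK : (A + 1 : ℝ) < K * |y|) : y ∈ slopeCover A K := by
  obtain ⟨p, q, -, hq, rfl, a, ha, b, hb, k, hk⟩ := hy
  by_cases hk0 : k = 0
  · left
    rw [hk0, mul_zero, sub_eq_zero] at hk
    have hq_unit : IsUnit q := isUnit_of_dvd_unit (Dvd.intro_left a hk) (Int.isUnit_iff.2 hb)
    rcases Int.isUnit_iff.1 hq_unit with rfl | rfl
    · exact ⟨p, by simp⟩
    · exact ⟨-p, by simp [div_neg]⟩
  right
  have hqR : (q : ℝ) ≠ 0 := Int.cast_ne_zero.2 hq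
  have hkR : (k : ℝ) ≠ 0 := Int.cast_ne_zero.2 hk0
  have hkR_eq : (a : ℝ) * q - b = p * k := by exact_mod_cast hk
  have hy : (p : ℝ) / q = (a - b / q) / k := by
    field_simp
    linarith
  have hb_abs : |(b : ℝ)| = 1 := by rcases hb with rfl | rfl <;> simp
  have hq_abs : 1 ≤ |(q : ℝ)| := by exact_mod_cast Int.one_le_abs hq
  have hk_lt : |(k : ℝ)| < K := by
    refine lt_of_mul_lt_mul_right (lt_of_le_of_lt ?_ hK) (abs_nonneg _)
    calc |(k : ℝ)| * |(p : ℝ) / q| = |(a : ℝ) - b / q| := by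
          rw [hy, abs_div, mul_div_cancel₀ _ (abs_ne_zero.2 hkR)]
      _ ≤ |(a : ℝ)| + |(b : ℝ)| / |(q : ℝ)| := by rw [← abs_div]; exact abs_sub _ _
      _ ≤ A + 1 := by
          gcongr
          · exact_mod_cast ha
          · rw [hb_abs, div_le_one (by positivity)]
            exact hq_abs
  have hk_mem : k ∈ Icc (-(K : ℤ)) K := by
    rw [mem_Icc, ← abs_le]
    exact_mod_cast hk_lt.le
  simp only [mem_iUnion]
  exact ⟨a, abs_le.1 ha, k, hk_mem, b, hb, mem_insert_of_mem _ ⟨q, hy.symm⟩⟩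

theorem closure_slopeSet_subset (A : ℤ) :
    closure (slopeSet A) ⊆ insert 0 (⋃ K : ℕ, slopeCover A K) := by
  intro x hx
  rcases eq_or_ne x 0 with rfl | hx0
  · exact mem_insert _ _
  obtain ⟨K, hK⟩ := exists_nat_gt ((A + 1 : ℝ) / |x|)
  rw [div_lt_iff₀ (abs_pos.2 hx0)] at hK
  let U : Set ℝ := {y | (A + 1 : ℝ) < K * |y|}
  have hU : IsOpen U := isOpen_lt continuous_const (continuous_const.mul continuous_abs)
  have hxK : x ∈ slopeCover A K :=
    closure_minimal (fun y hy ↦ mem_slopeCover hy.2 hy.1) (isClosed_slopeCover A K)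
      (hU.inter_closure ⟨hK, hx⟩)
  exact mem_insert_of_mem _ (mem_iUnion.2 ⟨K, hxK⟩)

theorem isNowhereDense_of_countable_closure {s : Set ℝ} (hs : (closure s).Countable) :
    IsNowhereDense s :=
  interior_eq_empty_iff_dense_compl.2 (hs.dense_compl ℝ)

theorem stmt17_general (A : ℤ) :
    IsNowhereDense {x : ℝ | ∃ p q : ℤ, 1 ≤ p ∧ q ≠ 0 ∧ x = (p : ℝ) / (q : ℝ) ∧
      ∃ a : ℤ, |a| ≤ A ∧ ∃ b : ℤ, (b = 1 ∨ b = -1) ∧ p ∣ (a * q - b)} :=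
  isNowhereDense_of_countable_closure <| ((countable_iUnion (countable_slopeCover A)).insert 0).mono
    (closure_slopeSet_subset A)

theorem stmt17 (A : ℤ) (hA : 1 ≤ A) :
    IsNowhereDense {x : ℝ | ∃ p q : ℤ, 1 ≤ p ∧ q ≠ 0 ∧ x = (p : ℝ) / (q : ℝ) ∧
      ∃ a : ℤ, |a| ≤ A ∧ ∃ b : ℤ, (b = 1 ∨ b = -1) ∧ p ∣ (a * q - b)} :=
  stmt17_general A
end
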